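/- Let Σ_c be a CNF formula over a variable set V with |V| = n, let Σ_p be the simulation formula built from Σ_c, and let I be a non-contradictory partial assignment on V. Then unit resolution on Σ_p|_I never produces the empty clause, i.e., U(Σ_p|_I, i) is non-contradictory for every i; in particular, every literal inferred by unit resolution on Σ_p|_I that is not in I is a positive literal over one of the fresh variables x_{ω,i}. -/

import Mathlib

/-!
Basic framework: literals, clauses, CNF formulae (as multisets of clauses so that
sizes add up), partial assignments, and the stages of unit resolution.
-/

/-- A literal over variable type `V`: a variable together with a polarity
(`true` = positive literal `v`, `false` = negative literal `¬v`). -/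
abbrev Lit (V : Type) := V × Bool

/-- The negation of a literal. -/
def Lit.negate {V : Type} (l : Lit V) : Lit V := (l.1, !l.2)

/-- A clause: a finite set of literals. -/
abbrev Clause (V : Type) := Finset (Lit V)

/-- A CNF formula: a finite multiset of clauses. -/
abbrev CNF (V : Type) := Multiset (Clause V)

/-- The size of a formula: the sum of the sizes (numbers of literals) of its clauses. -/
def CNF.size {V : Type} (S : CNF V) : ℕ := (S.map Finset.card).sum

/-- A set of literals (assignment) is contradictory if some variable receives both values. -/
def Contradictory {V : Type} (U : Set (Lit V)) : Prop :=
  ∃ v : V, (v, true) ∈ U ∧ (v, false) ∈ U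

/-- `c` is a unit clause with respect to `U`, with active literal `l`: `U` falsifies
all the literals of `c` except exactly the literal `l`. -/
def IsUnitWith {V : Type} (c : Clause V) (U : Set (Lit V)) (l : Lit V) : Prop :=
  l ∈ c ∧ l.negate ∉ U ∧ ∀ r ∈ c, r ≠ l → Lit.negate r ∈ U

/-- The stages of unit resolution on `S`: `UR S 0 = ∅`, and `UR S (i+1)` extends
`UR S i` with the active literal of every clause of `S` that is unit w.r.t. `UR S i`. -/
def UR {V : Type} (S : CNF V) : ℕ → Set (Lit V)
  | 0 => ∅
  | i + 1 => UR S i ∪ { l | ∃ c ∈ S, IsUnitWith c (UR S i) l }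

/-- Unit resolution on `S` produces the empty clause. -/
def ProducesEmpty {V : Type} (S : CNF V) : Prop := ∃ i, Contradictory (UR S i)

/-- Unit resolution on `S` infers the literal `l`. -/
def Infers {V : Type} (S : CNF V) (l : Lit V) : Prop := ∃ i, l ∈ UR S i

/-- `S|_I`: the formula `S` together with a unit clause `(l)` for each literal `l ∈ I`. -/
def CNF.restrict {V : Type} (S : CNF V) (I : Multiset (Lit V)) : CNF V :=
  S + I.map (fun l => ({l} : Clause V))

/-- A finset of literals is a non-contradictory (partial) assignment. -/
def NonContra {V : Type} (I : Finset (Lit V)) : Prop :=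
  ∀ v : V, ¬((v, true) ∈ I ∧ (v, false) ∈ I)

/-- `S` computes the matching function `f`, with domain `D`, by contradiction. -/
def ComputesByContradiction {W : Type} (S : CNF W) (D : Set (Finset (Lit W)))
    (f : Finset (Lit W) → Bool) : Prop :=
  ∀ I ∈ D, (ProducesEmpty (S.restrict I.val) ↔ f I = true)

/-- `S` computes the matching function `f`, with domain `D`, by propagation with
output literal `l`. -/
def ComputesByPropagation {W : Type} (S : CNF W) (l : Lit W) (D : Set (Finset (Lit W)))
    (f : Finset (Lit W) → Bool) : Prop :=
  ∀ I ∈ D, ¬ ProducesEmpty (S.restrict I.val) ∧ (Infers (S.restrict I.val) l ↔ f I = true)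

/-!
The simulation formula used to turn a formula computing by contradiction into one
computing by propagation.
-/

/-- Extended variables for the simulation formula: the original variables of `V`,
the fresh variables `x l i` (for `l` a literal over `V` and a stage index `i`),
and one fresh output variable `out` (called `s` in the paper). -/
inductive ExtVar (V : Type) where
  | base : V → ExtVar V
  | x : Lit V → ℕ → ExtVar V
  | out : ExtVar V
deriving DecidableEq

/-- Lift a literal over `V` to the corresponding literal over `ExtVar V`. -/
def extLit {V : Type} (l : Lit V) : Lit (ExtVar V) := (ExtVar.base l.1, l.2)

section Simulation

variable (V : Type) [Fintype V] [DecidableEq V]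

/-- Injection clauses `(v ∨ x_{¬v,1})` and `(¬v ∨ x_{v,1})` for each `v ∈ V`. -/
def injClauses : CNF (ExtVar V) :=
  (Finset.univ.val : Multiset V).map
    (fun v => ({(ExtVar.base v, true), (ExtVar.x (v, false) 1, true)} : Clause (ExtVar V)))
  + (Finset.univ.val : Multiset V).map
    (fun v => ({(ExtVar.base v, false), (ExtVar.x (v, true) 1, true)} : Clause (ExtVar V)))

/-- Replication clauses `(¬x_{l,i} ∨ x_{l,i+1})` for each literal `l` over `V` and
each `i ∈ 1..n`. -/
def repClauses (n : ℕ) : CNF (ExtVar V) :=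
  (Finset.univ.val : Multiset (Lit V)).bind (fun l =>
    ((Finset.Icc 1 n).val).map (fun i =>
      ({(ExtVar.x l i, false), (ExtVar.x l (i + 1), true)} : Clause (ExtVar V))))

/-- Deduction clauses `(x_{l,i+1} ∨ ⋁_{r ∈ c ∖ {l}} ¬x_{¬r,i})` for each clause `c`
of `S` with at least two literals, each `l ∈ c`, and each `i ∈ 1..n`. -/
def dedClauses (S : CNF V) (n : ℕ) : CNF (ExtVar V) :=
  (S.filter (fun c => 2 ≤ c.card)).bind (fun c =>
    c.val.bind (fun l =>
      ((Finset.Icc 1 n).val).map (fun i =>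
        insert ((ExtVar.x l (i + 1), true) : Lit (ExtVar V))
          ((c.erase l).image (fun r => ((ExtVar.x r.negate i, false) : Lit (ExtVar V)))))))

/-- Unit clauses `(x_{l,1})` for each singleton clause `(l)` of `S`. -/
def unitXClauses (S : CNF V) : CNF (ExtVar V) :=
  (S.filter (fun c => c.card = 1)).bind (fun c =>
    c.val.map (fun l => ({(ExtVar.x l 1, true)} : Clause (ExtVar V))))

/-- The simulation formula `Σ_p` built from `S` (here `n = |V|`). -/
def simFormula (S : CNF V) : CNF (ExtVar V) :=
  injClauses V + repClauses V (Fintype.card V) + dedClauses V S (Fintype.card V)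
    + unitXClauses V S

/-- The final clauses `(¬x_{v,n+1} ∨ ¬x_{¬v,n+1} ∨ s)` for each `v ∈ V`. -/
def finClauses (n : ℕ) : CNF (ExtVar V) :=
  (Finset.univ.val : Multiset V).map (fun v =>
    ({(ExtVar.x (v, true) (n + 1), false), (ExtVar.x (v, false) (n + 1), false),
      (ExtVar.out, true)} : Clause (ExtVar V)))

/-- The completed simulation formula `Σ_p'`, including the final clauses. -/
def simFormula' (S : CNF V) : CNF (ExtVar V) :=
  simFormula V S + finClauses V (Fintype.card V)

end Simulation

/-- Unit resolution on `Σ_p|_I` never produces the empty clause: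
every stage is non-contradictory, and every literal inferred that is not in
(the lift of) `I` is a positive literal over one of the fresh variables `x l j`. -/
theorem simulation_no_empty_clause {V : Type} [Fintype V] [DecidableEq V]
    (Sc : CNF V) (I : Finset (Lit V)) (hI : NonContra I) :
    ∀ i : ℕ,
      ¬ Contradictory (UR ((simFormula V Sc).restrict (I.val.map extLit)) i) ∧
      ∀ l ∈ UR ((simFormula V Sc).restrict (I.val.map extLit)) i,
        l ∈ I.val.map extLit ∨ ∃ (w : Lit V) (j : ℕ), l = (ExtVar.x w j, true) := by
  have key : ∀ i : ℕ, ∀ l ∈ UR ((simFormula V Sc).restrict (I.val.map extLit)) i,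
      l ∈ I.val.map extLit ∨ ∃ (w : Lit V) (j : ℕ), l = (ExtVar.x w j, true) := by
    intro i
    induction i with
    | zero => intro l hl; simp [UR] at hl
    | succ i ih =>
      intro l hl
      rcases hl with hl | ⟨c, hc, hcl, hneg, hall⟩
      · exact ih l hl
      -- no negative x-literal is in the current stage
      have hxneg : ∀ (w : Lit V) (j : ℕ),
          ((ExtVar.x w j, false) : Lit (ExtVar V)) ∉
            UR ((simFormula V Sc).restrict (I.val.map extLit)) i := by
        intro w j hmem
        rcases ih _ hmem with h | ⟨w', j', h⟩
        · rcases Multiset.mem_map.mp h with ⟨a, _, ha⟩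
          simp [extLit, Prod.ext_iff] at ha
        · simp at h
      rcases Multiset.mem_add.mp hc with hc | hc
      · -- c is a clause of the simulation formula
        rcases Multiset.mem_add.mp hc with hc | hc
        · rcases Multiset.mem_add.mp hc with hc | hc
          · rcases Multiset.mem_add.mp hc with hc | hc
            · -- injection clauses
              rcases Multiset.mem_add.mp hc with hc | hc
              · rcases Multiset.mem_map.mp hc with ⟨v, _, rfl⟩
                rcases Finset.mem_insert.mp hcl with rfl | hcl
                · exfalso
                  have hne : ((ExtVar.x (v, false) 1, true) : Lit (ExtVar V)) ≠
                      (ExtVar.base v, true) := by simp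
                  have := hall _ (by simp) hne
                  exact hxneg _ _ (by simpa [Lit.negate] using this)
                · rcases Finset.mem_singleton.mp hcl with rfl
                  exact Or.inr ⟨_, _, rfl⟩
              · rcases Multiset.mem_map.mp hc with ⟨v, _, rfl⟩
                rcases Finset.mem_insert.mp hcl with rfl | hcl
                · exfalso
                  have hne : ((ExtVar.x (v, true) 1, true) : Lit (ExtVar V)) ≠
                      (ExtVar.base v, false) := by simp
                  have := hall _ (by simp) hne
                  exact hxneg _ _ (by simpa [Lit.negate] using this)
                · rcases Finset.mem_singleton.mp hcl with rfl
                  exact Or.inr ⟨_, _, rfl⟩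
            · -- replication clauses
              rcases Multiset.mem_bind.mp hc with ⟨w, _, hc⟩
              rcases Multiset.mem_map.mp hc with ⟨j, _, rfl⟩
              rcases Finset.mem_insert.mp hcl with rfl | hcl
              · exfalso
                have hne : ((ExtVar.x w (j + 1), true) : Lit (ExtVar V)) ≠
                    (ExtVar.x w j, false) := by simp
                have := hall _ (by simp) hne
                exact hxneg _ _ (by simpa [Lit.negate] using this)
              · rcases Finset.mem_singleton.mp hcl with rfl
                exact Or.inr ⟨_, _, rfl⟩
          · -- deduction clauses
            rcases Multiset.mem_bind.mp hc with ⟨c0, hc0, hc⟩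
            rcases Multiset.mem_bind.mp hc with ⟨l0, hl0, hc⟩
            rcases Multiset.mem_map.mp hc with ⟨j, _, rfl⟩
            rcases Finset.mem_insert.mp hcl with rfl | hcl
            · exact Or.inr ⟨_, _, rfl⟩
            · exfalso
              rcases Finset.mem_image.mp hcl with ⟨r, _, rfl⟩
              have hne : ((ExtVar.x l0 (j + 1), true) : Lit (ExtVar V)) ≠
                  (ExtVar.x r.negate j, false) := by simp
              have := hall _ (Finset.mem_insert_self _ _) hne
              exact hxneg _ _ (by simpa [Lit.negate] using this)
        · -- unit x clauses
          rcases Multiset.mem_bind.mp hc with ⟨c0, hc0, hc⟩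
          rcases Multiset.mem_map.mp hc with ⟨w, _, rfl⟩
          rcases Finset.mem_singleton.mp hcl with rfl
          exact Or.inr ⟨_, _, rfl⟩
      · -- unit clauses from the assignment I
        rcases Multiset.mem_map.mp hc with ⟨a, ha, rfl⟩
        rcases Finset.mem_singleton.mp hcl with rfl
        exact Or.inl ha
  intro i
  refine ⟨?_, key i⟩
  rintro ⟨v, h1, h0⟩
  have k1 := key i _ h1
  have k0 := key i _ h0
  -- (v, false) must come from I
  have k0' : (v, false) ∈ I.val.map extLit := by
    rcases k0 with h | ⟨w, j, h⟩
    · exact h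
    · simp [Prod.ext_iff] at h
  rcases Multiset.mem_map.mp k0' with ⟨b, hb, hbe⟩
  have hb2 : b.2 = false := congrArg Prod.snd hbe
  have hbv : ExtVar.base b.1 = v := congrArg Prod.fst hbe
  -- (v, true) must come from I too
  have k1' : (v, true) ∈ I.val.map extLit := by
    rcases k1 with h | ⟨w, j, h⟩
    · exact h
    · exfalso
      have : v = ExtVar.x w j := congrArg Prod.fst h
      rw [← hbv] at this
      cases this
  rcases Multiset.mem_map.mp k1' with ⟨a, ha, hae⟩
  have ha2 : a.2 = true := congrArg Prod.snd hae
  have hav : ExtVar.base a.1 = v := congrArg Prod.fst hae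
  have hv : a.1 = b.1 := by injection hav.trans hbv.symm
  exact hI a.1 ⟨by rw [← ha2]; exact ha, by rw [hv, ← hb2]; exact hb⟩
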